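/- If a subset T ⊆ N is not contained in D', the unique largest weakly decodable subset of N, then G(T) is strictly less than the maximum of G over all subsets of N: G(T) < max over T' ⊆ N of G(T'). -/

import Mathlib

/-!
Since `T ⊄ D'`, `T` is not weakly decodable: some `B ⊆ T` has `cfGap T B < 0`.
For `A ⊆ T ∖ B` and `C = (T ∖ B) ∖ A`, chain rules split the bracket of `G(T)` at `S = A ∪ B`
and that of `G(T ∖ B)` at `S = A` into common terms and conditional mutual informations, and
their nonnegativity bounds the former by the latter plus `cfGap T B`. Taking `A` optimal for
`T ∖ B` gives `G(T) ≤ G(T ∖ B) + cfGap T B < G(T ∖ B) ≤ max_{T'} G(T')`.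
-/

open scoped BigOperators

/-- Shannon entropy (natural log) of a random variable `X` on a finite sample
space `Ω` with probability mass function `μ`. -/
noncomputable def entropy {Ω α : Type*} [Fintype Ω] [Fintype α] [DecidableEq α]
    (μ : Ω → ℝ) (X : Ω → α) : ℝ :=
  ∑ a : α, Real.negMulLog (∑ ω ∈ Finset.univ.filter (fun ω => X ω = a), μ ω)

/-- Conditional mutual information `I(X;Y|Z)` for random variables on a finite
sample space with pmf `μ`. -/
noncomputable def condMI {Ω α β γ : Type*} [Fintype Ω]
    [Fintype α] [DecidableEq α] [Fintype β] [DecidableEq β] [Fintype γ] [DecidableEq γ]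
    (μ : Ω → ℝ) (X : Ω → α) (Y : Ω → β) (Z : Ω → γ) : ℝ :=
  entropy μ (fun ω => (X ω, Z ω)) + entropy μ (fun ω => (Y ω, Z ω))
    - entropy μ (fun ω => (X ω, Y ω, Z ω)) - entropy μ Z

/-- Sample space for the compress-and-forward multiple-relay channel:
a value of `(x₀, (xᵢ)ᵢ, (yᵢ)ᵢ, y_{n+1}, (ŷᵢ)ᵢ)`. -/
abbrev CFOmega {n : ℕ} (X0A : Type) (XA YA : Fin n → Type) (YdA : Type)
    (YhA : Fin n → Type) : Type :=
  X0A × (∀ i, XA i) × (∀ i, YA i) × YdA × (∀ i, YhA i)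

section CF

variable {n : ℕ} {X0A YdA : Type} {XA YA YhA : Fin n → Type}

/-- The source input `X₀`. -/
def rvX0 : CFOmega X0A XA YA YdA YhA → X0A := fun ω => ω.1

/-- The tuple of relay inputs `X_S = (Xᵢ)_{i∈S}`. -/
def rvXS (S : Finset (Fin n)) : CFOmega X0A XA YA YdA YhA → (∀ i : S, XA i) :=
  fun ω i => ω.2.1 i

/-- The tuple of relay outputs `Y_S = (Yᵢ)_{i∈S}`. -/
def rvYS (S : Finset (Fin n)) : CFOmega X0A XA YA YdA YhA → (∀ i : S, YA i) :=
  fun ω i => ω.2.2.1 i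

/-- The destination output `Y_{n+1}`. -/
def rvYd : CFOmega X0A XA YA YdA YhA → YdA := fun ω => ω.2.2.2.1

/-- The tuple of compressions `Ŷ_S = (Ŷᵢ)_{i∈S}`. -/
def rvYhS (S : Finset (Fin n)) : CFOmega X0A XA YA YdA YhA → (∀ i : S, YhA i) :=
  fun ω i => ω.2.2.2.2 i

/-- The joint pmf
`p(x₀)·∏ᵢ p(xᵢ) · p(y₁,…,y_{n+1}|x₀,…,x_n) · ∏ᵢ p(ŷᵢ|yᵢ,xᵢ)`. -/
noncomputable def muCF (p0 : X0A → ℝ) (pX : ∀ i, XA i → ℝ)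
    (W : X0A → (∀ i, XA i) → ((∀ i, YA i) × YdA) → ℝ)
    (κ : ∀ i, YA i → XA i → YhA i → ℝ) :
    CFOmega X0A XA YA YdA YhA → ℝ :=
  fun ω => p0 ω.1 * (∏ i, pX i (ω.2.1 i)) * W ω.1 ω.2.1 (ω.2.2.1, ω.2.2.2.1)
    * ∏ i, κ i (ω.2.2.1 i) (ω.2.1 i) (ω.2.2.2.2 i)

variable [Fintype X0A] [DecidableEq X0A] [Fintype YdA] [DecidableEq YdA]
  [∀ i, Fintype (XA i)] [∀ i, DecidableEq (XA i)]
  [∀ i, Fintype (YA i)] [∀ i, DecidableEq (YA i)]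
  [∀ i, Fintype (YhA i)] [∀ i, DecidableEq (YhA i)]

/-- `I(X_S; Ŷ_{D∖S}, Y_{n+1} | X_0, X_{D∖S}) − I(Y_S; Ŷ_S | X_0, X_D, Y_{n+1}, Ŷ_{D∖S})`. -/
noncomputable def cfGap (μ : CFOmega X0A XA YA YdA YhA → ℝ) (D S : Finset (Fin n)) : ℝ :=
  condMI μ (rvXS S) (fun ω => (rvYhS (D \ S) ω, rvYd ω))
    (fun ω => (rvX0 ω, rvXS (D \ S) ω))
  - condMI μ (rvYS S) (rvYhS S)
    (fun ω => (rvX0 ω, rvXS D ω, rvYd ω, rvYhS (D \ S) ω))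

/-- `D ⊆ N` is weakly decodable if for every `S ⊆ D`,
`I(X_S; Ŷ_{D∖S}, Y_{n+1} | X_0, X_{D∖S}) − I(Y_S; Ŷ_S | X_0, X_D, Y_{n+1}, Ŷ_{D∖S}) ≥ 0`. -/
def WeaklyDecodable (μ : CFOmega X0A XA YA YdA YhA → ℝ) (D : Finset (Fin n)) : Prop :=
  ∀ S ⊆ D, 0 ≤ cfGap μ D S

/-- `D ⊆ N` is strictly decodable if for every nonempty `S ⊆ D`,
`I(X_S; Ŷ_{D∖S}, Y_{n+1} | X_0, X_{D∖S}) − I(Y_S; Ŷ_S | X_0, X_D, Y_{n+1}, Ŷ_{D∖S}) > 0`. -/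
def StrictlyDecodable (μ : CFOmega X0A XA YA YdA YhA → ℝ) (D : Finset (Fin n)) : Prop :=
  ∀ S ⊆ D, S.Nonempty → 0 < cfGap μ D S

/-- `G(T) = min_{S ⊆ T} [ I(X_0, X_S; Ŷ_{T∖S}, Y_{n+1} | X_{T∖S})
  − I(Y_S; Ŷ_S | X_0, X_T, Y_{n+1}, Ŷ_{T∖S}) ]`. -/
noncomputable def Gfun (μ : CFOmega X0A XA YA YdA YhA → ℝ) (T : Finset (Fin n)) : ℝ :=
  T.powerset.inf' (Finset.powerset_nonempty T) fun S =>
    condMI μ (fun ω => (rvX0 ω, rvXS S ω)) (fun ω => (rvYhS (T \ S) ω, rvYd ω))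
      (rvXS (T \ S))
    - condMI μ (rvYS S) (rvYhS S)
      (fun ω => (rvX0 ω, rvXS T ω, rvYd ω, rvYhS (T \ S) ω))

end CF

open Finset Real

section Entropy

variable {Ω α β γ α' β' γ' : Type*} [Fintype Ω] {μ : Ω → ℝ}
  [Fintype α] [DecidableEq α] [Fintype β] [DecidableEq β] [Fintype γ] [DecidableEq γ]
  [Fintype α'] [DecidableEq α'] [Fintype β'] [DecidableEq β'] [Fintype γ'] [DecidableEq γ']

theorem entropy_eq_sum_neg_mul_log (X : Ω → α) :
    entropy μ X = ∑ ω, -(μ ω * log (∑ ω' with X ω' = X ω, μ ω')) := by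
  rw [entropy, ← Finset.sum_fiberwise univ X]
  refine sum_congr rfl fun a _ => ?_
  rw [negMulLog, neg_mul, sum_mul, ← sum_neg_distrib]
  exact sum_congr rfl fun ω hω => by rw [(mem_filter.mp hω).2]

theorem entropy_congr {X : Ω → α} {Y : Ω → β} (h : ∀ ω ω', X ω = X ω' ↔ Y ω = Y ω') :
    entropy μ X = entropy μ Y := by
  simp only [entropy_eq_sum_neg_mul_log, h]

theorem condMI_congr {X : Ω → α} {Y : Ω → β} {Z : Ω → γ} {X' : Ω → α'} {Y' : Ω → β'}
    {Z' : Ω → γ'} (hX : ∀ ω ω', X ω = X ω' ↔ X' ω = X' ω')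
    (hY : ∀ ω ω', Y ω = Y ω' ↔ Y' ω = Y' ω') (hZ : ∀ ω ω', Z ω = Z ω' ↔ Z' ω = Z' ω') :
    condMI μ X Y Z = condMI μ X' Y' Z' := by
  unfold condMI
  congr 2
  · congr 1 <;> exact entropy_congr fun ω ω' => by simp only [Prod.mk.injEq, hX, hY, hZ]
  · exact entropy_congr fun ω ω' => by simp only [Prod.mk.injEq, hX, hY, hZ]
  · exact entropy_congr hZ

theorem condMI_comm (X : Ω → α) (Y : Ω → β) (Z : Ω → γ) :
    condMI μ X Y Z = condMI μ Y X Z := by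
  have : entropy μ (fun ω => (X ω, Y ω, Z ω)) = entropy μ (fun ω => (Y ω, X ω, Z ω)) :=
    entropy_congr fun ω ω' => by simp only [Prod.mk.injEq]; tauto
  rw [condMI, condMI, this]
  ring

theorem condMI_prod_left (X : Ω → α) (X' : Ω → α') (Y : Ω → β) (Z : Ω → γ) :
    condMI μ (fun ω => (X ω, X' ω)) Y Z
      = condMI μ X Y Z + condMI μ X' Y (fun ω => (X ω, Z ω)) := by
  have h₁ : entropy μ (fun ω => ((X ω, X' ω), Z ω)) = entropy μ (fun ω => (X' ω, X ω, Z ω)) :=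
    entropy_congr fun ω ω' => by simp only [Prod.mk.injEq]; tauto
  have h₂ : entropy μ (fun ω => ((X ω, X' ω), Y ω, Z ω))
      = entropy μ (fun ω => (X' ω, Y ω, X ω, Z ω)) :=
    entropy_congr fun ω ω' => by simp only [Prod.mk.injEq]; tauto
  have h₃ : entropy μ (fun ω => (X ω, Y ω, Z ω)) = entropy μ (fun ω => (Y ω, X ω, Z ω)) :=
    entropy_congr fun ω ω' => by simp only [Prod.mk.injEq]; tauto
  simp only [condMI, h₁, h₂, h₃]
  ring

theorem condMI_prod_right (X : Ω → α) (Y : Ω → β) (Y' : Ω → β') (Z : Ω → γ) :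
    condMI μ X (fun ω => (Y ω, Y' ω)) Z
      = condMI μ X Y Z + condMI μ X Y' (fun ω => (Y ω, Z ω)) := by
  rw [condMI_comm, condMI_prod_left, condMI_comm Y, condMI_comm Y']

theorem sub_mul_div_le_mul_log {p x y m : ℝ} (hp : 0 ≤ p) (hx : p ≤ x) (hy : p ≤ y)
    (hm : p ≤ m) : p - x * y / m ≤ p * (log p + log m - log x - log y) := by
  rcases hp.eq_or_lt with rfl | hp
  · simp only [zero_sub, zero_mul, neg_nonpos]
    exact div_nonneg (mul_nonneg hx hy) hm
  have hx₀ : 0 < x := hp.trans_le hx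
  have hy₀ : 0 < y := hp.trans_le hy
  have hm₀ : 0 < m := hp.trans_le hm
  have hlog := log_le_sub_one_of_pos (show 0 < x * y / (m * p) by positivity)
  rw [log_div (by positivity) (by positivity), log_mul hx₀.ne' hy₀.ne',
    log_mul hm₀.ne' hp.ne'] at hlog
  have hscale : p * (x * y / (m * p) - 1) = x * y / m - p := by field_simp
  nlinarith [mul_le_mul_of_nonneg_left hlog hp.le]

theorem sum_sum_negMulLog_add_negMulLog_le {α β : Type*} [Fintype α] [Fintype β]
    (q : α → β → ℝ) (hq : ∀ a b, 0 ≤ q a b) :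
    ∑ a, ∑ b, negMulLog (q a b) + negMulLog (∑ a, ∑ b, q a b)
      ≤ ∑ a, negMulLog (∑ b, q a b) + ∑ b, negMulLog (∑ a, q a b) := by
  set m := ∑ a, ∑ b, q a b with hm
  set qA := fun a => ∑ b, q a b with hqA
  set qB := fun b => ∑ a, q a b with hqB
  have hgap : ∑ a, negMulLog (qA a) + ∑ b, negMulLog (qB b)
        - (∑ a, ∑ b, negMulLog (q a b) + negMulLog m)
      = ∑ a, ∑ b, q a b * (log (q a b) + log m - log (qA a) - log (qB b)) := by
    simp only [negMulLog, neg_mul, sum_neg_distrib, hm, hqA, hqB, sum_mul]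
    rw [sum_comm (f := fun b a => q a b * log (∑ a, q a b))]
    simp only [mul_add, mul_sub, sum_add_distrib, sum_sub_distrib]
    ring
  have hpoint : ∀ a b, q a b - qA a * qB b / m
      ≤ q a b * (log (q a b) + log m - log (qA a) - log (qB b)) := fun a b =>
    sub_mul_div_le_mul_log (hq a b)
      (single_le_sum (fun b _ => hq a b) (mem_univ b))
      (single_le_sum (fun a _ => hq a b) (mem_univ a))
      ((single_le_sum (fun b _ => hq a b) (mem_univ b)).trans
        (single_le_sum (fun a _ => sum_nonneg fun b _ => hq a b) (mem_univ a)))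
  have hmass : ∑ a, ∑ b, (q a b - qA a * qB b / m) = 0 := by
    have : ∑ a, ∑ b, qA a * qB b / m = m * m / m := by
      simp only [← sum_div, ← sum_mul_sum, hqA, hqB]
      rw [sum_comm (f := fun b a => q a b)]
    simp only [sum_sub_distrib, this, mul_self_div_self]
    exact sub_self _
  linarith [sum_le_sum fun a (_ : a ∈ univ) => sum_le_sum fun b (_ : b ∈ univ) => hpoint a b]

theorem sum_filter_eq_sum_sum_filter_and (P : Ω → Prop) [DecidablePred P] (Y : Ω → β) :
    ∑ ω with P ω, μ ω = ∑ b, ∑ ω with P ω ∧ Y ω = b, μ ω := by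
  simp only [← sum_fiberwise (univ.filter P) Y μ, filter_filter]

theorem condMI_nonneg (hμ : ∀ ω, 0 ≤ μ ω) (X : Ω → α) (Y : Ω → β) (Z : Ω → γ) :
    0 ≤ condMI μ X Y Z := by
  set F : α → β → γ → ℝ := fun a b c => ∑ ω with X ω = a ∧ Y ω = b ∧ Z ω = c, μ ω
  have hXYZ : entropy μ (fun ω => (X ω, Y ω, Z ω)) = ∑ c, ∑ a, ∑ b, negMulLog (F a b c) := by
    simp only [entropy, Fintype.sum_prod_type, Prod.mk.injEq, F]
    exact (sum_congr rfl fun a _ => sum_comm).trans sum_comm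
  have hXZ : entropy μ (fun ω => (X ω, Z ω)) = ∑ c, ∑ a, negMulLog (∑ b, F a b c) := by
    simp only [entropy, Fintype.sum_prod_type, Prod.mk.injEq, F]
    rw [sum_comm]
    refine sum_congr rfl fun c _ => sum_congr rfl fun a _ => ?_
    rw [sum_filter_eq_sum_sum_filter_and _ Y]
    simp only [and_comm, and_left_comm]
  have hYZ : entropy μ (fun ω => (Y ω, Z ω)) = ∑ c, ∑ b, negMulLog (∑ a, F a b c) := by
    simp only [entropy, Fintype.sum_prod_type, Prod.mk.injEq, F]
    rw [sum_comm]
    refine sum_congr rfl fun c _ => sum_congr rfl fun b _ => ?_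
    rw [sum_filter_eq_sum_sum_filter_and _ X]
    simp only [and_comm]
  have hZ : entropy μ Z = ∑ c, negMulLog (∑ a, ∑ b, F a b c) := by
    refine sum_congr rfl fun c _ => ?_
    rw [sum_filter_eq_sum_sum_filter_and _ X]
    refine congrArg _ (sum_congr rfl fun a _ => ?_)
    rw [sum_filter_eq_sum_sum_filter_and _ Y]
    simp only [and_comm, and_left_comm]
    rfl
  rw [condMI, hXYZ, hXZ, hYZ, hZ, ← sum_add_distrib, ← sum_sub_distrib, ← sum_sub_distrib]
  refine sum_nonneg fun c _ => ?_
  linarith [sum_sum_negMulLog_add_negMulLog_le (fun a b => F a b c)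
    fun a b => sum_nonneg fun ω _ => hμ ω]

theorem condMI_comp_le (hμ : ∀ ω, 0 ≤ μ ω) (f : α' → α) (X : Ω → α') (Y : Ω → β)
    (Z : Ω → γ) :
    condMI μ (fun ω => f (X ω)) Y Z ≤ condMI μ X Y Z := by
  have hsame : condMI μ X Y Z = condMI μ (fun ω => (f (X ω), X ω)) Y Z :=
    condMI_congr (fun ω ω' => by rw [Prod.mk.injEq, and_iff_right_of_imp (congrArg f)])
      (fun _ _ => .rfl) (fun _ _ => .rfl)
  rw [hsame, condMI_prod_left]
  linarith [condMI_nonneg hμ X Y fun ω => (f (X ω), Z ω)]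

variable {δ ε ζ η θ : Type*} [Fintype δ] [DecidableEq δ] [Fintype ε] [DecidableEq ε]
  [Fintype ζ] [DecidableEq ζ] [Fintype η] [DecidableEq η] [Fintype θ] [DecidableEq θ]

/-- Reading `U = (X₀, X_A)`, `V = (Ŷ_C, Y_{n+1})` and `H = Ŷ`, the left side is the bracket
of `G(A ∪ B ∪ C)` at `A ∪ B` and the right side that of `G(A ∪ C)` at `A` plus the gap
`cfGap (A ∪ B ∪ C) B`, up to regrouping of tuples. -/
theorem condMI_prod_sub_condMI_prod_le (hμ : ∀ ω, 0 ≤ μ ω) (U : Ω → α) (XB : Ω → β)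
    (XC : Ω → γ) (V : Ω → δ) (YA : Ω → ε) (YB : Ω → ζ) (HA : Ω → η) (HB : Ω → θ) :
    condMI μ (fun ω => (U ω, XB ω)) V XC
        - condMI μ (fun ω => (YA ω, YB ω)) (fun ω => (HA ω, HB ω))
            (fun ω => (XB ω, V ω, U ω, XC ω))
      ≤ condMI μ U V XC - condMI μ YA HA (fun ω => (V ω, U ω, XC ω))
        + (condMI μ XB (fun ω => (V ω, HA ω)) (fun ω => (U ω, XC ω))
          - condMI μ YB HB (fun ω => (HA ω, XB ω, V ω, U ω, XC ω))) := by
  have hL₁ := condMI_prod_left (μ := μ) U XB V XC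
  have hG₁ := condMI_prod_right (μ := μ) XB V HA (fun ω => (U ω, XC ω))
  have hL₂ := condMI_prod_right (μ := μ) (fun ω => (YA ω, YB ω)) HA HB
    (fun ω => (XB ω, V ω, U ω, XC ω))
  have hG₂ : condMI μ YB HB (fun ω => (HA ω, XB ω, V ω, U ω, XC ω))
      ≤ condMI μ (fun ω => (YA ω, YB ω)) HB (fun ω => (HA ω, XB ω, V ω, U ω, XC ω)) :=
    condMI_comp_le hμ Prod.snd (fun ω => (YA ω, YB ω)) HB _
  have hR₂ : condMI μ YA HA (fun ω => (V ω, U ω, XC ω))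
      ≤ condMI μ (fun ω => (XB ω, YA ω, YB ω)) HA (fun ω => (V ω, U ω, XC ω)) :=
    condMI_comp_le hμ (fun p : β × ε × ζ => p.2.1) (fun ω => (XB ω, YA ω, YB ω)) HA _
  have hR₂' := condMI_prod_left (μ := μ) XB (fun ω => (YA ω, YB ω)) HA
    (fun ω => (V ω, U ω, XC ω))
  linarith [condMI_nonneg hμ XB HA fun ω => (V ω, U ω, XC ω)]

end Entropy

section CF

variable {n : ℕ} {X0A YdA : Type} {XA YA YhA : Fin n → Type}

theorem rvXS_eq_iff {S : Finset (Fin n)} {ω ω' : CFOmega X0A XA YA YdA YhA} :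
    rvXS S ω = rvXS S ω' ↔ ∀ i ∈ S, ω.2.1 i = ω'.2.1 i := by
  simp only [rvXS, funext_iff, Subtype.forall]

theorem rvYS_eq_iff {S : Finset (Fin n)} {ω ω' : CFOmega X0A XA YA YdA YhA} :
    rvYS S ω = rvYS S ω' ↔ ∀ i ∈ S, ω.2.2.1 i = ω'.2.2.1 i := by
  simp only [rvYS, funext_iff, Subtype.forall]

theorem rvYhS_eq_iff {S : Finset (Fin n)} {ω ω' : CFOmega X0A XA YA YdA YhA} :
    rvYhS S ω = rvYhS S ω' ↔ ∀ i ∈ S, ω.2.2.2.2 i = ω'.2.2.2.2 i := by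
  simp only [rvYhS, funext_iff, Subtype.forall]

theorem muCF_nonneg {p0 : X0A → ℝ} {pX : ∀ i, XA i → ℝ}
    {W : X0A → (∀ i, XA i) → ((∀ i, YA i) × YdA) → ℝ} {κ : ∀ i, YA i → XA i → YhA i → ℝ}
    (hp0 : ∀ x, 0 ≤ p0 x) (hpX : ∀ i x, 0 ≤ pX i x) (hW : ∀ x0 x y, 0 ≤ W x0 x y)
    (hκ : ∀ i y x yh, 0 ≤ κ i y x yh) (ω : CFOmega X0A XA YA YdA YhA) :
    0 ≤ muCF p0 pX W κ ω :=
  mul_nonneg (mul_nonneg (mul_nonneg (hp0 _) (prod_nonneg fun i _ => hpX i _)) (hW _ _ _))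
    (prod_nonneg fun i _ => hκ i _ _ _)

variable [Fintype X0A] [DecidableEq X0A] [Fintype YdA] [DecidableEq YdA]
  [∀ i, Fintype (XA i)] [∀ i, DecidableEq (XA i)]
  [∀ i, Fintype (YA i)] [∀ i, DecidableEq (YA i)]
  [∀ i, Fintype (YhA i)] [∀ i, DecidableEq (YhA i)]

noncomputable def GfunTerm (μ : CFOmega X0A XA YA YdA YhA → ℝ) (T S : Finset (Fin n)) : ℝ :=
  condMI μ (fun ω => (rvX0 ω, rvXS S ω)) (fun ω => (rvYhS (T \ S) ω, rvYd ω))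
    (rvXS (T \ S))
  - condMI μ (rvYS S) (rvYhS S)
    (fun ω => (rvX0 ω, rvXS T ω, rvYd ω, rvYhS (T \ S) ω))

set_option synthInstance.maxSize 2048 in
theorem GfunTerm_union_le {μ : CFOmega X0A XA YA YdA YhA → ℝ} (hμ : ∀ ω, 0 ≤ μ ω)
    {A B C : Finset (Fin n)} (hAB : Disjoint A B) (hAC : Disjoint A C) (hBC : Disjoint B C) :
    GfunTerm μ (A ∪ B ∪ C) (A ∪ B) ≤ GfunTerm μ (A ∪ C) A + cfGap μ (A ∪ B ∪ C) B := by
  have hTAB : (A ∪ B ∪ C) \ (A ∪ B) = C :=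
    union_sdiff_cancel_left (disjoint_union_left.mpr ⟨hAC, hBC⟩)
  have hTB : (A ∪ B ∪ C) \ B = A ∪ C := by
    rw [union_right_comm, union_sdiff_distrib, Finset.sdiff_self, union_empty]
    exact sdiff_eq_self_of_disjoint (disjoint_union_left.mpr ⟨hAB, hBC.symm⟩)
  have hACA : (A ∪ C) \ A = C := union_sdiff_cancel_left hAC
  have key := condMI_prod_sub_condMI_prod_le hμ (fun ω => (rvX0 ω, rvXS A ω)) (rvXS B)
    (rvXS C) (fun ω => (rvYhS C ω, rvYd ω)) (rvYS A) (rvYS B) (rvYhS A) (rvYhS B)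
  rw [GfunTerm, GfunTerm, cfGap, hTAB, hTB, hACA]
  convert key using 3
  all_goals
    apply condMI_congr <;> intro ω ω' <;>
      simp only [Prod.mk.injEq, rvXS_eq_iff, rvYS_eq_iff, rvYhS_eq_iff, forall_mem_union] <;>
      tauto

theorem Gfun_eq_inf'_GfunTerm (μ : CFOmega X0A XA YA YdA YhA → ℝ) (T : Finset (Fin n)) :
    Gfun μ T = T.powerset.inf' (powerset_nonempty T) (GfunTerm μ T) := rfl

theorem Gfun_le_Gfun_sdiff_add_cfGap {μ : CFOmega X0A XA YA YdA YhA → ℝ} (hμ : ∀ ω, 0 ≤ μ ω)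
    {T B : Finset (Fin n)} (hB : B ⊆ T) : Gfun μ T ≤ Gfun μ (T \ B) + cfGap μ T B := by
  obtain ⟨A, hA, hGA⟩ := exists_mem_eq_inf' (powerset_nonempty (T \ B)) (GfunTerm μ (T \ B))
  rw [mem_powerset] at hA
  have hT : A ∪ B ∪ (T \ B) \ A = T := by
    rw [union_right_comm, union_sdiff_of_subset hA, sdiff_union_of_subset hB]
  have hcut := GfunTerm_union_le hμ (sdiff_disjoint.mono_left hA)
    (disjoint_sdiff (t := T \ B)) (sdiff_disjoint.symm.mono_right sdiff_subset)
  rw [hT, union_sdiff_of_subset hA] at hcut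
  rw [Gfun_eq_inf'_GfunTerm, Gfun_eq_inf'_GfunTerm, hGA]
  exact (inf'_le _ (mem_powerset.mpr (union_subset (hA.trans sdiff_subset) hB))).trans hcut

end CF

theorem Gfun_lt_max_of_not_subset_largest_weaklyDecodable_general
    {n : ℕ} {X0A YdA : Type} {XA YA YhA : Fin n → Type}
    [Fintype X0A] [DecidableEq X0A] [Fintype YdA] [DecidableEq YdA]
    [∀ i, Fintype (XA i)] [∀ i, DecidableEq (XA i)]
    [∀ i, Fintype (YA i)] [∀ i, DecidableEq (YA i)]
    [∀ i, Fintype (YhA i)] [∀ i, DecidableEq (YhA i)]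
    (p0 : X0A → ℝ) (pX : ∀ i, XA i → ℝ)
    (W : X0A → (∀ i, XA i) → ((∀ i, YA i) × YdA) → ℝ)
    (κ : ∀ i, YA i → XA i → YhA i → ℝ)
    (hp0 : ∀ x, 0 ≤ p0 x)
    (hpX : ∀ i x, 0 ≤ pX i x)
    (hW : ∀ x0 x y, 0 ≤ W x0 x y)
    (hκ : ∀ i y x yh, 0 ≤ κ i y x yh)
    (D' : Finset (Fin n))
    (hD'max : ∀ E : Finset (Fin n), WeaklyDecodable (muCF p0 pX W κ) E → E ⊆ D')
    (T : Finset (Fin n)) (hT : ¬ T ⊆ D') :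
    Gfun (muCF p0 pX W κ) T <
      (Finset.univ : Finset (Fin n)).powerset.sup'
        (Finset.powerset_nonempty _) (Gfun (muCF p0 pX W κ)) := by
  obtain ⟨B, hBT, hgap⟩ : ∃ B ⊆ T, cfGap (muCF p0 pX W κ) T B < 0 := by
    by_contra! h
    exact hT (hD'max T h)
  calc Gfun (muCF p0 pX W κ) T
      ≤ Gfun (muCF p0 pX W κ) (T \ B) + cfGap (muCF p0 pX W κ) T B :=
        Gfun_le_Gfun_sdiff_add_cfGap (muCF_nonneg hp0 hpX hW hκ) hBT
    _ < Gfun (muCF p0 pX W κ) (T \ B) := by linarith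
    _ ≤ _ := le_sup' _ (mem_powerset.mpr (subset_univ _))

/-- If `T ⊆ N` is not contained in the unique largest weakly
decodable subset `D'` of `N`, then `G(T) < max_{T' ⊆ N} G(T')`. -/
theorem Gfun_lt_max_of_not_subset_largest_weaklyDecodable
    {n : ℕ} {X0A YdA : Type} {XA YA YhA : Fin n → Type}
    [Fintype X0A] [DecidableEq X0A] [Fintype YdA] [DecidableEq YdA]
    [∀ i, Fintype (XA i)] [∀ i, DecidableEq (XA i)]
    [∀ i, Fintype (YA i)] [∀ i, DecidableEq (YA i)]
    [∀ i, Fintype (YhA i)] [∀ i, DecidableEq (YhA i)]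
    (p0 : X0A → ℝ) (pX : ∀ i, XA i → ℝ)
    (W : X0A → (∀ i, XA i) → ((∀ i, YA i) × YdA) → ℝ)
    (κ : ∀ i, YA i → XA i → YhA i → ℝ)
    (hp0 : ∀ x, 0 ≤ p0 x) (hp0s : ∑ x, p0 x = 1)
    (hpX : ∀ i x, 0 ≤ pX i x) (hpXs : ∀ i, ∑ x, pX i x = 1)
    (hW : ∀ x0 x y, 0 ≤ W x0 x y) (hWs : ∀ x0 x, ∑ y, W x0 x y = 1)
    (hκ : ∀ i y x yh, 0 ≤ κ i y x yh) (hκs : ∀ i y x, ∑ yh, κ i y x yh = 1)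
    (D' : Finset (Fin n))
    (hD' : WeaklyDecodable (muCF p0 pX W κ) D')
    (hD'max : ∀ E : Finset (Fin n), WeaklyDecodable (muCF p0 pX W κ) E → E ⊆ D')
    (T : Finset (Fin n)) (hT : ¬ T ⊆ D') :
    Gfun (muCF p0 pX W κ) T <
      (Finset.univ : Finset (Fin n)).powerset.sup'
        (Finset.powerset_nonempty _) (Gfun (muCF p0 pX W κ)) :=
  Gfun_lt_max_of_not_subset_largest_weaklyDecodable_general p0 pX W κ hp0 hpX hW hκ D' hD'max T hT
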